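/- arXiv:2403.01701 — 3 statements merged into one kernel-verified Lean document; each statement's English description precedes it below -/
import Mathlib

section
/- Let λ : Fin 4 → ℝ with ∑ᵢ λᵢ = 0. Define R_{ijkl} = (1 + λᵢλⱼ)(δ_{ik}δ_{jl} - δ_{il}δ_{jk}), Rᵢⱼ = ∑ₖ R_{ikjk}, s = ∑ᵢ Rᵢᵢ, and the Weyl tensor W_{ijkl} = R_{ijkl} - (1/2)(R_{ik}δ_{jl} - R_{il}δ_{jk} + R_{jl}δ_{ik} - R_{jk}δ_{il}) + (s/6)(δ_{ik}δ_{jl} - δ_{il}δ_{jk}). Then ∑_{i,j,k,l} W_{ijkl}² = (7/3)(∑ᵢλᵢ²)² - 4·∑ᵢλᵢ⁴. -/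
set_option maxHeartbeats 1000000 in
theorem weyl_norm_minimal_hypersurface_S5 (lam : Fin 4 → ℝ)
    (hmin : ∑ i, lam i = 0)
    (R : Fin 4 → Fin 4 → Fin 4 → Fin 4 → ℝ)
    (hR : ∀ i j k l, R i j k l =
      (1 + lam i * lam j) *
      ((if i = k then (1:ℝ) else 0) * (if j = l then 1 else 0) -
        (if i = l then 1 else 0) * (if j = k then 1 else 0)))
    (Ric : Fin 4 → Fin 4 → ℝ)
    (hRic : ∀ i j, Ric i j = ∑ k, R i k j k)
    (s : ℝ) (hs : s = ∑ i, Ric i i)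
    (W : Fin 4 → Fin 4 → Fin 4 → Fin 4 → ℝ)
    (hW : ∀ i j k l, W i j k l = R i j k l -
      (1/2) * (Ric i k * (if j = l then 1 else 0) -
        Ric i l * (if j = k then 1 else 0) +
        Ric j l * (if i = k then 1 else 0) -
        Ric j k * (if i = l then 1 else 0)) +
      (s / 6) * ((if i = k then (1:ℝ) else 0) * (if j = l then 1 else 0) -
        (if i = l then 1 else 0) * (if j = k then 1 else 0))) :
    ∑ i, ∑ j, ∑ k, ∑ l, (W i j k l) ^ 2 =
      (7/3) * (∑ i, (lam i) ^ 2) ^ 2 - 4 * ∑ i, (lam i) ^ 4 := by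
  rw [Fin.sum_univ_four] at hmin
  have h3 : lam 3 = -(lam 0 + lam 1 + lam 2) := by linarith
  have hRic' : ∀ i j, Ric i j = if i = j then 3 - (lam i)^2 else 0 := by
    intro i j
    rw [hRic, Fin.sum_univ_four, hR, hR, hR, hR]
    fin_cases i <;> fin_cases j <;> simp (config := { decide := true }) <;>
    first
      | linear_combination lam 0 * hmin
      | linear_combination lam 1 * hmin
      | linear_combination lam 2 * hmin
      | linear_combination lam 3 * hmin
  have hs' : s = 12 - ((lam 0)^2 + (lam 1)^2 + (lam 2)^2 + (lam 3)^2) := by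
    rw [hs, Fin.sum_univ_four, hRic', hRic', hRic', hRic']
    norm_num
    ring
  have hsum2 : ∀ i j, (∑ k, ∑ l, (W i j k l)^2) =
      2 * (if i = j then 0 else
        lam i * lam j + ((lam i)^2 + (lam j)^2) / 2 -
          ((lam 0)^2 + (lam 1)^2 + (lam 2)^2 + (lam 3)^2) / 6)^2 := by
    intro i j
    simp only [Fin.sum_univ_four, hW, hR, hRic', hs']
    fin_cases i <;> fin_cases j <;> simp (config := { decide := true }) <;> ring
  simp only [hsum2]
  simp only [Fin.sum_univ_four]
  simp (config := { decide := true })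
  rw [h3]
  ring
end

section
/- Let n ≥ 3 and k ≥ 2 be natural numbers. The function g(t) = ∑_{i=1}^{k-1} (n-1)^i (1/(2i-1) + 2/n) t^{i-1} - (n-2)/(n·t) is strictly increasing on (0,∞), tends to -∞ as t → 0⁺ and to +∞ as t → ∞ (for k ≥ 2 it is positive for large t), and hence has a unique positive root. -/
/-!
Write `g t = P t - c / t` with `c = (n - 2) / n > 0` and `P` a polynomial with nonnegative
coefficients. Then `P` is monotone and `-c / t` strictly increasing on `(0, ∞)`, `P` is bounded
near `0` while `-c / t → -∞`, and the term `i = 1` of `P` alone gives `g 1 ≥ n > 0`. The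
intermediate value theorem and strict monotonicity then give exactly one positive root.
-/

open Filter Topology Set

theorem monotoneOn_sum_mul_pow {ι : Type*} (s : Finset ι) (a : ι → ℝ) (m : ι → ℕ)
    (ha : ∀ i ∈ s, 0 ≤ a i) : MonotoneOn (fun t : ℝ => ∑ i ∈ s, a i * t ^ m i) (Ici 0) :=
  fun _ hx _ _ hxy => Finset.sum_le_sum fun i hi =>
    mul_le_mul_of_nonneg_left (pow_le_pow_left₀ hx hxy _) (ha i hi)

section SubDiv

variable {f : ℝ → ℝ} {c : ℝ}

theorem strictMonoOn_sub_div (hf : MonotoneOn f (Ioi 0)) (hc : 0 < c) :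
    StrictMonoOn (fun t => f t - c / t) (Ioi 0) := by
  simp only [sub_eq_add_neg]
  exact hf.add_strictMono fun a ha b _ hab => neg_lt_neg (div_lt_div_of_pos_left hc ha hab)

theorem tendsto_sub_div_nhdsGT_zero_atBot {a : ℝ} (hf : Tendsto f (𝓝[>] 0) (𝓝 a)) (hc : 0 < c) :
    Tendsto (fun t => f t - c / t) (𝓝[>] 0) atBot := by
  have hdiv : Tendsto (fun t : ℝ => c / t) (𝓝[>] 0) atTop := by
    simpa only [div_eq_mul_inv] using tendsto_inv_nhdsGT_zero.const_mul_atTop hc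
  simpa only [sub_eq_add_neg, Function.comp_def] using hf.add_atBot (tendsto_neg_atTop_atBot.comp hdiv)

theorem continuousOn_sub_div (hf : Continuous f) :
    ContinuousOn (fun t => f t - c / t) (Ioi 0) :=
  hf.continuousOn.sub (continuousOn_const.div continuousOn_id fun _ ht => ne_of_gt ht)

end SubDiv

theorem IsPreconnected.existsUnique_eq_of_injOn {X α : Type*} [TopologicalSpace X]
    [LinearOrder α] [TopologicalSpace α] [OrderClosedTopology α] {s : Set X}
    (hs : IsPreconnected s) {l : Filter X} [l.NeBot] (hl : l ≤ 𝓟 s) {f : X → α}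
    (hf : ContinuousOn f s) (hinj : InjOn f s) (hbot : Tendsto f l atBot) {a : X} (ha : a ∈ s)
    {v : α} (hv : v ≤ f a) : ∃! x, x ∈ s ∧ f x = v := by
  obtain ⟨x, hx, hfx⟩ := hs.intermediate_value₂_eventually₁ ha hl continuousOn_const hf hv
    (hbot.eventually_le_atBot v)
  exact ⟨x, ⟨hx, hfx.symm⟩, fun y ⟨hy, hfy⟩ => hinj hy hx (hfy.trans hfx)⟩

namespace WeightFunction

noncomputable def poly (n k : ℕ) (t : ℝ) : ℝ :=
  ∑ i ∈ Finset.Icc 1 (k - 1), ((n : ℝ) - 1) ^ i * (1 / (2 * i - 1) + 2 / n) * t ^ (i - 1)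

variable {n : ℕ}

theorem coeff_nonneg (hn : 1 ≤ n) {i : ℕ} (hi : 1 ≤ i) :
    0 ≤ ((n : ℝ) - 1) ^ i * (1 / (2 * i - 1) + 2 / n) := by
  have hn' : (1 : ℝ) ≤ n := by exact_mod_cast hn
  have hi' : (1 : ℝ) ≤ i := by exact_mod_cast hi
  have : (0 : ℝ) ≤ 2 * i - 1 := by linarith
  have : (0 : ℝ) ≤ n - 1 := by linarith
  positivity

theorem monotoneOn_poly (hn : 1 ≤ n) (k : ℕ) : MonotoneOn (poly n k) (Ici 0) :=
  monotoneOn_sum_mul_pow _ _ _ fun _ hi => coeff_nonneg hn (Finset.mem_Icc.mp hi).1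

theorem continuous_poly (n k : ℕ) : Continuous (poly n k) := by
  unfold poly
  fun_prop

theorem poly_one_ge (hn : 1 ≤ n) {k : ℕ} (hk : 2 ≤ k) :
    ((n : ℝ) - 1) * (1 + 2 / n) ≤ poly n k 1 := by
  have hterm := Finset.single_le_sum
    (f := fun i : ℕ => ((n : ℝ) - 1) ^ i * (1 / (2 * (i : ℝ) - 1) + 2 / n) * 1 ^ (i - 1))
    (fun i hi => by simpa using coeff_nonneg hn (Finset.mem_Icc.mp hi).1)
    (Finset.mem_Icc.mpr ⟨le_rfl, by omega⟩ : 1 ∈ Finset.Icc 1 (k - 1))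
  norm_num [poly] at hterm ⊢
  exact hterm

end WeightFunction

open WeightFunction

theorem weight_function_unique_root (n k : ℕ) (hn : 3 ≤ n) (hk : 2 ≤ k)
    (g : ℝ → ℝ)
    (hg : g = fun t : ℝ => (∑ i ∈ Finset.Icc 1 (k - 1),
      ((n : ℝ) - 1) ^ i * (1 / (2 * i - 1) + 2 / n) * t ^ (i - 1)) -
      ((n : ℝ) - 2) / (n * t)) :
    StrictMonoOn g (Set.Ioi 0) ∧
    Tendsto g (nhdsWithin 0 (Set.Ioi 0)) atBot ∧
    (∀ᶠ t in atTop, 0 < g t) ∧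
    ∃! t : ℝ, 0 < t ∧ g t = 0 := by
  have hn' : (3 : ℝ) ≤ n := by exact_mod_cast hn
  have hc : 0 < ((n : ℝ) - 2) / n := div_pos (by linarith) (by linarith)
  replace hg : g = fun t => poly n k t - ((n : ℝ) - 2) / n / t := by
    simp only [hg, poly, div_mul_eq_div_div]
  have hmono : StrictMonoOn g (Ioi 0) := hg ▸
    strictMonoOn_sub_div ((monotoneOn_poly (by omega) k).mono Ioi_subset_Ici_self) hc
  have hbot : Tendsto g (𝓝[>] 0) atBot := hg ▸ tendsto_sub_div_nhdsGT_zero_atBot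
    (((continuous_poly n k).tendsto 0).mono_left nhdsWithin_le_nhds) hc
  -- the `i = 1` coefficient exceeds `c` by exactly `n`
  have hg1 : 0 < g 1 := by
    have := poly_one_ge (n := n) (by omega) hk
    have hsplit : ((n : ℝ) - 1) * (1 + 2 / n) - (n - 2) / n = n := by field_simp; ring
    simp only [hg, div_one]
    linarith
  refine ⟨hmono, hbot, ?_, ?_⟩
  · filter_upwards [eventually_ge_atTop 1] with t ht
    exact hg1.trans_le (hmono.monotoneOn (mem_Ioi.mpr one_pos) (mem_Ioi.mpr (one_pos.trans_le ht)) ht)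
  · exact isPreconnected_Ioi.existsUnique_eq_of_injOn (l := 𝓝[>] 0) inf_le_right
      (hg ▸ continuousOn_sub_div (continuous_poly n k)) hmono.injOn hbot (mem_Ioi.mpr one_pos) hg1.le
end

section
/- Let g ∈ ℤ, A > 0, k ≥ 2 an integer, and let K : M → ℝ be an integrable function on a finite measure space (M,μ) of total measure A, satisfying K ≤ 1 pointwise and ∫_M K dμ = 4π(1 - g). If g ≥ 1, then (1/A)·∫_M (2 - 2K)^k dμ ≥ 2^k, with equality iff g = 1 and K = 0 almost everywhere. -/
/-!
Put `f = 2 - 2K ≥ 0`. By the Gauss–Bonnet hypothesis the mean of `f` is `2 + 8π(g - 1)/A ≥ 2`,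
so Jensen's inequality for the convex function `t ↦ tᵏ` on `[0, ∞)` gives
`⨍ fᵏ ≥ (⨍ f)ᵏ ≥ 2ᵏ`. Equality in the first step forces `⨍ f = 2`, i.e. `g = 1`, and equality
in Jensen for the strictly convex `tᵏ` (`k ≥ 2`) forces `f` to be a.e. constant, i.e. `K = 0` a.e.
-/

open MeasureTheory

section PowerMean

variable {α : Type*} [MeasurableSpace α] {μ : Measure α} [IsFiniteMeasure μ] {f : α → ℝ} {k : ℕ}

theorem pow_average_le_average_pow [NeZero μ] (hf₀ : ∀ᵐ x ∂μ, 0 ≤ f x) (hf : Integrable f μ)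
    (hfk : Integrable (fun x => f x ^ k) μ) :
    (⨍ x, f x ∂μ) ^ k ≤ ⨍ x, f x ^ k ∂μ :=
  (convexOn_pow k).map_average_le (continuous_pow k).continuousOn isClosed_Ici hf₀ hf hfk

theorem ae_eq_average_of_average_pow_eq (hk : 2 ≤ k) (hf₀ : ∀ᵐ x ∂μ, 0 ≤ f x)
    (hf : Integrable f μ) (hfk : Integrable (fun x => f x ^ k) μ)
    (h : ⨍ x, f x ^ k ∂μ = (⨍ x, f x ∂μ) ^ k) :
    f =ᵐ[μ] Function.const α (⨍ x, f x ∂μ) :=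
  ((strictConvexOn_pow hk).ae_eq_const_or_map_average_lt (continuous_pow k).continuousOn
    isClosed_Ici hf₀ hf hfk).resolve_right h.not_gt

variable [NeZero μ] {c : ℝ}

theorem pow_le_average_pow (hc : 0 ≤ c) (hcf : c ≤ ⨍ x, f x ∂μ) (hf₀ : ∀ᵐ x ∂μ, 0 ≤ f x)
    (hf : Integrable f μ) (hfk : Integrable (fun x => f x ^ k) μ) :
    c ^ k ≤ ⨍ x, f x ^ k ∂μ :=
  (pow_le_pow_left₀ hc hcf k).trans (pow_average_le_average_pow hf₀ hf hfk)

theorem average_eq_and_ae_eq_of_average_pow_eq_pow (hk : 2 ≤ k) (hc : 0 ≤ c)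
    (hcf : c ≤ ⨍ x, f x ∂μ) (hf₀ : ∀ᵐ x ∂μ, 0 ≤ f x) (hf : Integrable f μ)
    (hfk : Integrable (fun x => f x ^ k) μ) (h : ⨍ x, f x ^ k ∂μ = c ^ k) :
    ⨍ x, f x ∂μ = c ∧ f =ᵐ[μ] Function.const α c := by
  have hpow : (⨍ x, f x ∂μ) ^ k = c ^ k :=
    le_antisymm (h ▸ pow_average_le_average_pow hf₀ hf hfk) (pow_le_pow_left₀ hc hcf k)
  have hmean : ⨍ x, f x ∂μ = c := (pow_left_inj₀ (hc.trans hcf) hc (by omega)).mp hpow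
  refine ⟨hmean, hmean ▸ ae_eq_average_of_average_pow_eq hk hf₀ hf hfk ?_⟩
  rw [h, hpow]

end PowerMean

theorem sigma_k_lower_bound_dim2_general {M : Type*} [MeasurableSpace M]
    (μ : Measure M)
    (A : ℝ) (hA : (μ Set.univ).toReal = A) (hApos : 0 < A)
    (g : ℤ) (k : ℕ) (hk : 2 ≤ k)
    (K : M → ℝ) (hK1 : Integrable K μ) (hKle : ∀ x, K x ≤ 1)
    (hKint : Integrable (fun x => (2 - 2 * K x) ^ k) μ)
    (hGB : ∫ x, K x ∂μ = 4 * Real.pi * (1 - g))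
    (hg : 1 ≤ g) :
    (1 / A) * ∫ x, (2 - 2 * K x) ^ k ∂μ ≥ 2 ^ k ∧
    ((1 / A) * ∫ x, (2 - 2 * K x) ^ k ∂μ = 2 ^ k ↔
      g = 1 ∧ K =ᵐ[μ] 0) := by
  obtain ⟨hμ₀, hμ_fin⟩ := ENNReal.toReal_pos_iff.mp (hA ▸ hApos)
  have : IsFiniteMeasure μ := ⟨hμ_fin⟩
  have : NeZero μ := ⟨Measure.measure_univ_pos.mp hμ₀⟩
  have average_eq_div : ∀ φ : M → ℝ, ⨍ x, φ x ∂μ = (1 / A) * ∫ x, φ x ∂μ := fun φ => by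
    rw [average_eq, measureReal_def, hA, smul_eq_mul, one_div]
  have hf : Integrable (fun x => 2 - 2 * K x) μ := (integrable_const 2).sub (hK1.const_mul 2)
  have hf₀ : ∀ᵐ x ∂μ, 0 ≤ 2 - 2 * K x := .of_forall fun x => by linarith [hKle x]
  have hmean : ⨍ x, (2 - 2 * K x) ∂μ = 2 + 8 * Real.pi * (g - 1) / A := by
    rw [average_eq_div, integral_sub (integrable_const 2) (hK1.const_mul 2), integral_const,
      integral_const_mul, hGB, measureReal_def, hA, smul_eq_mul]
    field_simp
    ring
  have hexcess : 0 ≤ 8 * Real.pi * (g - 1) / A := by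
    have : (0 : ℝ) ≤ g - 1 := sub_nonneg.mpr (by exact_mod_cast hg)
    positivity
  have hmean_ge : 2 ≤ ⨍ x, (2 - 2 * K x) ∂μ := by linarith
  rw [← average_eq_div]
  refine ⟨pow_le_average_pow zero_le_two hmean_ge hf₀ hf hKint, fun h => ?_, ?_⟩
  · obtain ⟨hmean_eq, hconst⟩ :=
      average_eq_and_ae_eq_of_average_pow_eq_pow hk zero_le_two hmean_ge hf₀ hf hKint h
    have hexcess_eq : 8 * Real.pi * (g - 1) / A = 0 := by linarith
    have hgR : (g : ℝ) = 1 := by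
      simpa [hApos.ne', Real.pi_ne_zero, sub_eq_zero] using hexcess_eq
    refine ⟨by exact_mod_cast hgR, hconst.mono fun x hx => ?_⟩
    simp only [Function.const_apply] at hx
    simp only [Pi.zero_apply]
    linarith
  · rintro ⟨rfl, hK0⟩
    rw [average_congr (g := fun _ => (2 : ℝ) ^ k) (hK0.mono fun x hx => by simp [hx]),
      average_const]

theorem sigma_k_lower_bound_dim2 {M : Type*} [MeasurableSpace M]
    (μ : Measure M) [IsFiniteMeasure μ]
    (A : ℝ) (hA : (μ Set.univ).toReal = A) (hApos : 0 < A)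
    (g : ℤ) (k : ℕ) (hk : 2 ≤ k)
    (K : M → ℝ) (hK1 : Integrable K μ) (hKle : ∀ x, K x ≤ 1)
    (hKint : Integrable (fun x => (2 - 2 * K x) ^ k) μ)
    (hGB : ∫ x, K x ∂μ = 4 * Real.pi * (1 - g))
    (hg : 1 ≤ g) :
    (1 / A) * ∫ x, (2 - 2 * K x) ^ k ∂μ ≥ 2 ^ k ∧
    ((1 / A) * ∫ x, (2 - 2 * K x) ^ k ∂μ = 2 ^ k ↔
      g = 1 ∧ K =ᵐ[μ] 0) :=
  sigma_k_lower_bound_dim2_general μ A hA hApos g k hk K hK1 hKle hKint hGB hg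
end
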